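/- arXiv:2604.22549 — 2 statements merged into one kernel-verified Lean document; each statement's English description precedes it below -/
import Mathlib

section
/- Let Ã be a symmetric real matrix with eigendecomposition U Λ Uᵀ, and let g, h : ℝ → ℝ satisfy |g(λ_k)| = |h(λ_k)| for all eigenvalues λ_k. Then for any embedding matrix E, the filtered representations H_g = U g(Λ) Uᵀ E and H_h = U h(Λ) Uᵀ E satisfy Tr(H_gᵀ W H_g) = Tr(H_hᵀ W H_h) for every symmetric matrix W of the form W = U D Uᵀ with D diagonal. -/
open Matrix Finset

lemma filter_trace_formula (n d : ℕ) (U : Matrix (Fin n) (Fin n) ℝ)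
    (hU' : Uᵀ * U = 1) (a D : Fin n → ℝ) (E : Matrix (Fin n) (Fin d) ℝ) :
    Matrix.trace
      ((U * Matrix.diagonal a * Uᵀ * E)ᵀ * (U * Matrix.diagonal D * Uᵀ) *
        (U * Matrix.diagonal a * Uᵀ * E)) =
    ∑ i, D i * (a i)^2 * ∑ j, ((Uᵀ * E) i j)^2 := by
  set F := Uᵀ * E with hF
  have key : (U * Matrix.diagonal a * Uᵀ * E)ᵀ * (U * Matrix.diagonal D * Uᵀ) *
        (U * Matrix.diagonal a * Uᵀ * E)
      = Fᵀ * (Matrix.diagonal (fun i => a i * D i * a i) * F) := by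
    rw [hF]
    simp only [Matrix.transpose_mul, Matrix.transpose_transpose, Matrix.diagonal_transpose,
      Matrix.mul_assoc]
    rw [← Matrix.mul_assoc Uᵀ U, hU', Matrix.one_mul, ← Matrix.mul_assoc Uᵀ U, hU',
      Matrix.one_mul]
    simp only [← Matrix.mul_assoc, Matrix.diagonal_mul_diagonal]
    simp only [mul_assoc]
  rw [key, ← Matrix.trace_mul_comm]
  simp only [Matrix.trace, Matrix.diag, Matrix.mul_apply, Matrix.diagonal_apply,
    ite_mul, zero_mul, Finset.sum_ite_eq, Finset.sum_ite_eq', Finset.mem_univ, if_true,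
    Matrix.transpose_apply]
  refine Finset.sum_congr rfl fun i _ => ?_
  rw [Finset.mul_sum]
  refine Finset.sum_congr rfl fun j _ => ?_
  ring

theorem filter_sign_equivalence
    (n d : ℕ) (U : Matrix (Fin n) (Fin n) ℝ)
    (hU : U * Uᵀ = 1) (hU' : Uᵀ * U = 1)
    (lam : Fin n → ℝ) (g h : ℝ → ℝ)
    (hgh : ∀ k, |g (lam k)| = |h (lam k)|)
    (E : Matrix (Fin n) (Fin d) ℝ)
    (D : Fin n → ℝ) (W : Matrix (Fin n) (Fin n) ℝ)
    (hW : W = U * Matrix.diagonal D * Uᵀ) :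
    Matrix.trace
      ((U * Matrix.diagonal (fun k => g (lam k)) * Uᵀ * E)ᵀ * W *
        (U * Matrix.diagonal (fun k => g (lam k)) * Uᵀ * E)) =
    Matrix.trace
      ((U * Matrix.diagonal (fun k => h (lam k)) * Uᵀ * E)ᵀ * W *
        (U * Matrix.diagonal (fun k => h (lam k)) * Uᵀ * E)) := by
  subst hW
  rw [filter_trace_formula n d U hU' _ D E, filter_trace_formula n d U hU' _ D E]
  refine Finset.sum_congr rfl fun i _ => ?_
  rw [show (g (lam i))^2 = (h (lam i))^2 by rw [← sq_abs, hgh, sq_abs]]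
end

section
/- Suppose ρ ∈ (0,1), δ ≥ 0, and t, ∇ are real random variables with 1/(e²+1) ≤ t ≤ e²/(e²+1) a.s. and E[|∇ - E[∇]|] ≤ δ. If E[∇] = (2/(1-ρ))·c for a constant c ≠ 0 with |c| > 5(1-ρ)δ/2, then -E[t·∇] has the opposite sign of c. -/
/-! Writing `m = E[∇]`, centring gives `E[t∇] - m E[t] = E[(t - s)(∇ - m)]` with `s` the midpoint
of the range of `t`, so `E[t∇]` lies within `(b - a)/2 · E|∇ - m|` of `m E[t]`, while
`|m E[t]| ≥ a |m|`. For the sigmoid range `[1/(e²+1), e²/(e²+1)]` the ratio `(b - a)/(2a)` is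
`(e² - 1)/2 < 5`, and the hypothesis on `c` says exactly `|m| > 5δ`. -/

open Set

namespace MeasureTheory

variable {Ω : Type*} [MeasurableSpace Ω] {μ : Measure Ω} [IsProbabilityMeasure μ]
  {a b : ℝ} {t g : Ω → ℝ}

theorem integral_mul_sub_mul_integral_eq (hti : Integrable t μ) (hgi : Integrable g μ)
    (htgi : Integrable (fun ω => t ω * g ω) μ) (s : ℝ) :
    ∫ ω, t ω * g ω ∂μ - (∫ ω, g ω ∂μ) * ∫ ω, t ω ∂μ
      = ∫ ω, (t ω - s) * (g ω - ∫ ω', g ω' ∂μ) ∂μ := by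
  set m := ∫ ω, g ω ∂μ
  have hexpand : (fun ω => (t ω - s) * (g ω - m))
      = fun ω => (t ω * g ω - m * t ω) - (s * g ω - s * m) := by
    funext ω; ring
  rw [hexpand, integral_sub, integral_sub, integral_sub, integral_const_mul, integral_const_mul,
    integral_const]
  · simp only [probReal_univ, one_smul]
    ring
  exacts [hgi.const_mul s, integrable_const _, htgi, hti.const_mul m,
    htgi.sub (hti.const_mul m), (hgi.const_mul s).sub (integrable_const _)]

theorem abs_integral_mul_sub_mul_integral_le (ht : ∀ᵐ ω ∂μ, t ω ∈ Icc a b)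
    (hti : Integrable t μ) (hgi : Integrable g μ) (htgi : Integrable (fun ω => t ω * g ω) μ) :
    |∫ ω, t ω * g ω ∂μ - (∫ ω, g ω ∂μ) * ∫ ω, t ω ∂μ|
      ≤ (b - a) / 2 * ∫ ω, |g ω - ∫ ω', g ω' ∂μ| ∂μ := by
  set m := ∫ ω, g ω ∂μ
  have hdev : Integrable (fun ω => |g ω - m|) μ := (hgi.sub (integrable_const m)).abs
  rw [integral_mul_sub_mul_integral_eq hti hgi htgi ((a + b) / 2), ← integral_const_mul]
  refine (abs_integral_le_integral_abs).trans (integral_mono_of_nonneg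
    (Filter.Eventually.of_forall fun _ => abs_nonneg _) (hdev.const_mul _) ?_)
  filter_upwards [ht] with ω ⟨hta, htb⟩
  rw [abs_mul]
  gcongr
  rw [abs_le]
  constructor <;> linarith

theorem integral_mul_integral_mul_pos (ha : 0 < a) (ht : ∀ᵐ ω ∂μ, t ω ∈ Icc a b)
    (hti : Integrable t μ) (hgi : Integrable g μ) (htgi : Integrable (fun ω => t ω * g ω) μ)
    (hsmall : (b - a) / 2 * ∫ ω, |g ω - ∫ ω', g ω' ∂μ| ∂μ < a * |∫ ω, g ω ∂μ|) :
    0 < (∫ ω, g ω ∂μ) * ∫ ω, t ω * g ω ∂μ := by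
  have hclose := (abs_integral_mul_sub_mul_integral_le ht hti hgi htgi).trans_lt hsmall
  have hta : a ≤ ∫ ω, t ω ∂μ := by
    simpa using integral_mono_ae (integrable_const a) hti (ht.mono fun _ h => h.1)
  set m := ∫ ω, g ω ∂μ
  have hm : 0 < |m| := pos_of_mul_pos_right ((abs_nonneg _).trans_lt hclose) ha.le
  have hspread : 0 ≤ m * m * (∫ ω, t ω ∂μ - a) :=
    mul_nonneg (mul_self_nonneg m) (sub_nonneg.mpr hta)
  obtain ⟨hlow, hupp⟩ := abs_lt.mp hclose
  rcases lt_or_gt_of_ne (abs_pos.mp hm) with hneg | hpos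
  · rw [abs_of_neg hneg] at hlow hupp
    nlinarith [mul_pos_of_neg_of_neg hneg (sub_neg.mpr hupp)]
  · rw [abs_of_pos hpos] at hlow hupp
    nlinarith [mul_pos hpos (neg_lt_iff_pos_add.mp hlow)]

end MeasureTheory

theorem Real.exp_two_lt_eleven : Real.exp 2 < 11 := by
  have h := Real.exp_one_lt_d9
  rw [show (2 : ℝ) = 1 + 1 by norm_num, Real.exp_add]
  nlinarith [Real.exp_pos 1]

open MeasureTheory

theorem bpr_gradient_nonvanishing_general
    {Ω : Type*} [MeasureSpace Ω] [IsProbabilityMeasure (volume : Measure Ω)]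
    (ρ δ c : ℝ) (hρ : ρ ∈ Set.Ioo (0 : ℝ) 1)
    (t grad : Ω → ℝ)
    (ht : ∀ᵐ ω, t ω ∈ Set.Icc (1 / (Real.exp 2 + 1)) (Real.exp 2 / (Real.exp 2 + 1)))
    (hti : Integrable t) (hgi : Integrable grad)
    (htgi : Integrable (fun ω => t ω * grad ω))
    (hdev : (∫ ω, |grad ω - ∫ ω', grad ω'|) ≤ δ)
    (hmean : (∫ ω, grad ω) = (2 / (1 - ρ)) * c)
    (hcδ : |c| > 5 * (1 - ρ) * δ / 2) :
    (0 < c → -(∫ ω, t ω * grad ω) < 0) ∧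
    (c < 0 → 0 < -(∫ ω, t ω * grad ω)) := by
  have hρ1 : 0 < 1 - ρ := sub_pos.mpr hρ.2
  have hmean_large : 5 * δ < |∫ ω, grad ω| := by
    rw [hmean, abs_mul, abs_of_pos (div_pos two_pos hρ1), div_mul_eq_mul_div, lt_div_iff₀ hρ1]
    linarith
  have hdev_nonneg : 0 ≤ ∫ ω, |grad ω - ∫ ω', grad ω'| := integral_nonneg fun _ => abs_nonneg _
  have hsmall : (Real.exp 2 / (Real.exp 2 + 1) - 1 / (Real.exp 2 + 1)) / 2 *
      ∫ ω, |grad ω - ∫ ω', grad ω'| < 1 / (Real.exp 2 + 1) * |∫ ω, grad ω| := by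
    rw [show (Real.exp 2 / (Real.exp 2 + 1) - 1 / (Real.exp 2 + 1)) / 2 *
        ∫ ω, |grad ω - ∫ ω', grad ω'|
        = 1 / (Real.exp 2 + 1) * ((Real.exp 2 - 1) / 2 * ∫ ω, |grad ω - ∫ ω', grad ω'|) by ring]
    gcongr
    nlinarith [Real.exp_two_lt_eleven]
  have hsign := integral_mul_integral_mul_pos (by positivity) ht hti hgi htgi hsmall
  rw [hmean] at hsign
  have hscale : 0 < 2 / (1 - ρ) := div_pos two_pos hρ1
  refine ⟨fun hc => ?_, fun hc => ?_⟩
  · linarith [pos_of_mul_pos_right hsign (mul_pos hscale hc).le]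
  · linarith [neg_of_mul_pos_right hsign (mul_neg_of_pos_of_neg hscale hc).le]

theorem bpr_gradient_nonvanishing
    {Ω : Type*} [MeasureSpace Ω] [IsProbabilityMeasure (volume : Measure Ω)]
    (ρ δ c : ℝ) (hρ : ρ ∈ Set.Ioo (0 : ℝ) 1) (hδ : 0 ≤ δ)
    (t grad : Ω → ℝ)
    (ht : ∀ᵐ ω, t ω ∈ Set.Icc (1 / (Real.exp 2 + 1)) (Real.exp 2 / (Real.exp 2 + 1)))
    (hti : Integrable t) (hgi : Integrable grad)
    (htgi : Integrable (fun ω => t ω * grad ω))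
    (hdev : (∫ ω, |grad ω - ∫ ω', grad ω'|) ≤ δ)
    (hmean : (∫ ω, grad ω) = (2 / (1 - ρ)) * c)
    (hc : c ≠ 0) (hcδ : |c| > 5 * (1 - ρ) * δ / 2) :
    (0 < c → -(∫ ω, t ω * grad ω) < 0) ∧
    (c < 0 → 0 < -(∫ ω, t ω * grad ω)) :=
  bpr_gradient_nonvanishing_general ρ δ c hρ t grad ht hti hgi htgi hdev hmean hcδ
end
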